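/- For every n ≥ 2 and every k with 1 ≤ k ≤ L_{2n−2} − 1: if d is the base-phi expansion of L_{2n−1} + k and e is the base-phi expansion of L_{2n+1} + k, then e(i) = d(i) for all i with −2n+2 ≤ i ≤ 2n−3, e(2n+1) = 1, e(2n) = e(2n−1) = e(2n−2) = 0, e(−2n+1) = 1, e(−2n) = e(−2n−1) = 0, e(−2n−2) = 1, and e(i) = 0 for i > 2n+1 and for i < −2n−2. (This is the recursion β(L_{2n+1}+k) = 1000(10)^{-1}β(L_{2n−1}+k)(01)^{-1}1001 on the interval I_n.) -/

import Mathlib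

/-- The golden mean φ = (1+√5)/2. -/
noncomputable def phi : ℝ := (1 + Real.sqrt 5) / 2

/-- `d : ℤ → ℕ` is a base-phi expansion of `N`: finitely supported, digits at most 1,
no two consecutive digits equal 1, and `∑ d i * φ^i = N`. -/
def IsBasePhi (N : ℕ) (d : ℤ → ℕ) : Prop :=
  {i : ℤ | d i ≠ 0}.Finite ∧ (∀ i, d i ≤ 1) ∧ (∀ i, d i * d (i + 1) = 0) ∧
    ∑' i : ℤ, (d i : ℝ) * phi ^ i = (N : ℝ)

/-- The Lucas numbers: L 0 = 2, L 1 = 1, L (n+2) = L (n+1) + L n. -/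
def Lucas : ℕ → ℕ
  | 0 => 2
  | 1 => 1
  | n + 2 => Lucas (n + 1) + Lucas n

noncomputable def psi : ℝ := (1 - Real.sqrt 5) / 2

lemma sqrt5_sq : Real.sqrt 5 ^ 2 = 5 := Real.sq_sqrt (by norm_num)
lemma sqrt5_lt : 2 < Real.sqrt 5 := by
  have := Real.lt_sqrt (x := 2) (y := 5) (by norm_num)
  rw [this]; norm_num
lemma one_lt_phi : 1 < phi := by unfold phi; nlinarith [sqrt5_lt]
lemma phi_pos : 0 < phi := lt_trans one_pos one_lt_phi
lemma phi_ne : phi ≠ 0 := ne_of_gt phi_pos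
lemma phi_sq : phi ^ 2 = phi + 1 := by unfold phi; nlinarith [sqrt5_sq]
lemma psi_sq : psi ^ 2 = psi + 1 := by unfold psi; nlinarith [sqrt5_sq]
lemma phi_mul_psi : phi * psi = -1 := by unfold phi psi; nlinarith [sqrt5_sq]
lemma psi_ne : psi ≠ 0 := by intro h; have := phi_mul_psi; rw [h] at this; simp at this
lemma psi_eq : psi = -phi⁻¹ := by
  have h : phi⁻¹ = -psi := inv_eq_of_mul_eq_one_right (by nlinarith [phi_mul_psi])
  rw [h]; ring
lemma phi_inv : phi⁻¹ = phi - 1 :=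
  inv_eq_of_mul_eq_one_right (by nlinarith [phi_sq])
lemma psi_inv : psi⁻¹ = psi - 1 :=
  inv_eq_of_mul_eq_one_right (by nlinarith [psi_sq])

lemma zpow_fib (i : ℤ) : phi ^ (i + 2) = phi ^ (i + 1) + phi ^ i := by
  rw [zpow_add₀ phi_ne, zpow_add₀ phi_ne]
  rw [show ((2:ℤ)) = ((2:ℕ):ℤ) by norm_num, zpow_natCast, phi_sq, zpow_one]
  ring

lemma psi_zpow (i : ℤ) : psi ^ i = (-1 : ℝ) ^ i * phi ^ (-i) := by
  rw [psi_eq, neg_eq_neg_one_mul, mul_zpow, inv_zpow, ← zpow_neg]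

lemma abs_psi_zpow (i : ℤ) : |psi ^ i| = phi ^ (-i) := by
  rw [psi_zpow, abs_mul, abs_of_pos (zpow_pos phi_pos _)]
  have : |(-1:ℝ) ^ i| = 1 := by
    rcases Int.even_or_odd i with h | h
    · rw [h.neg_one_zpow]; simp
    · rw [Odd.neg_one_zpow h]; simp
  rw [this, one_mul]

lemma phi_zpow_lt {a b : ℤ} (h : a < b) : phi ^ a < phi ^ b :=
  zpow_lt_zpow_right₀ one_lt_phi h

lemma phi_zpow_lt_iff {a b : ℤ} : phi ^ a < phi ^ b ↔ a < b :=
  zpow_lt_zpow_iff_right₀ one_lt_phi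

lemma sum_pow_lt (s : Finset ℤ) : ∀ (m : ℤ), (∀ i ∈ s, i ≤ m) →
    (∀ i ∈ s, i + 1 ∉ s) → ∑ i ∈ s, phi ^ i < phi ^ (m + 1) := by
  induction s using Finset.strongInduction with
  | _ s ih =>
    intro m hm hnc
    rcases s.eq_empty_or_nonempty with rfl | hne
    · simpa using zpow_pos phi_pos (m + 1)
    · set M := s.max' hne with hM
      have hMs : M ∈ s := s.max'_mem hne
      have hsub : s.erase M ⊂ s := Finset.erase_ssubset hMs
      have hle : ∀ i ∈ s.erase M, i ≤ M - 2 := by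
        intro i hi
        have h1 : i ∈ s := Finset.mem_of_mem_erase hi
        have h2 : i ≠ M := Finset.ne_of_mem_erase hi
        have h3 : i ≤ M := s.le_max' i h1
        have h4 : i ≠ M - 1 := by
          intro h
          exact hnc i h1 (by rw [h]; simpa using hMs)
        omega
      have ihe := ih _ hsub (M - 2) hle
        (fun i hi h => hnc i (Finset.mem_of_mem_erase hi) (Finset.mem_of_mem_erase h))
      rw [← Finset.add_sum_erase _ _ hMs]
      have e1 : phi ^ (M - 1) + phi ^ M = phi ^ (M + 1) := by
        have := zpow_fib (M - 1)
        simp only [show M - 1 + 2 = M + 1 by ring, show M - 1 + 1 = M by ring] at this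
        linarith
      have e2 : phi ^ (M + 1) ≤ phi ^ (m + 1) :=
        zpow_le_zpow_right₀ one_lt_phi.le (by have := hm M hMs; omega)
      have e3 : phi ^ (M - 2 + 1) = phi ^ (M - 1) := by ring_nf
      rw [e3] at ihe
      linarith

lemma sum_pow_neg_lt (s : Finset ℤ) (m : ℤ) (hs : ∀ i ∈ s, m ≤ i)
    (hnc : ∀ i ∈ s, i + 1 ∉ s) : ∑ i ∈ s, phi ^ (-i) < phi ^ (-m + 1) := by
  have h1 : ∀ i ∈ Finset.image Neg.neg s, i ≤ -m := by
    intro i hi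
    simp only [Finset.mem_image] at hi
    obtain ⟨a, ha, rfl⟩ := hi
    exact neg_le_neg (hs a ha)
  have h2 : ∀ i ∈ Finset.image Neg.neg s, i + 1 ∉ Finset.image Neg.neg s := by
    intro i hi hi1
    simp only [Finset.mem_image] at hi hi1
    obtain ⟨a, ha, rfl⟩ := hi
    obtain ⟨b, hb, hba⟩ := hi1
    have : b = a - 1 := by omega
    subst this
    exact hnc _ hb (by rw [show a - 1 + 1 = a by ring]; exact ha)
  have key := sum_pow_lt (Finset.image Neg.neg s) (-m) h1 h2
  rw [Finset.sum_image (fun a ha b hb h => neg_injective h)] at key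
  exact key

lemma exists_int_rep (i : ℤ) : ∃ a b : ℤ, phi ^ i = a + b * phi ∧ psi ^ i = a + b * psi := by
  induction i using Int.induction_on with
  | zero => exact ⟨1, 0, by simp, by simp⟩
  | succ n ih =>
    obtain ⟨a, b, h1, h2⟩ := ih
    refine ⟨b, a + b, ?_, ?_⟩
    · rw [zpow_add_one₀ phi_ne, h1]
      have := phi_sq
      push_cast
      linear_combination (b : ℝ) * this
    · rw [zpow_add_one₀ psi_ne, h2]
      have := psi_sq
      push_cast
      linear_combination (b : ℝ) * this
  | pred n ih =>
    obtain ⟨a, b, h1, h2⟩ := ih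
    refine ⟨b - a, a, ?_, ?_⟩
    · rw [show (-(n:ℤ) - 1) = (-(n:ℤ)) + (-1) by ring, zpow_add₀ phi_ne, h1, zpow_neg_one,
        phi_inv]
      have := phi_sq
      push_cast
      linear_combination (b : ℝ) * this
    · rw [show (-(n:ℤ) - 1) = (-(n:ℤ)) + (-1) by ring, zpow_add₀ psi_ne, h2, zpow_neg_one,
        psi_inv]
      have := psi_sq
      push_cast
      linear_combination (b : ℝ) * this

lemma irrational_phi : Irrational phi := by
  have h5 : Irrational (Real.sqrt 5) := (by norm_num : Nat.Prime 5).irrational_sqrt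
  have : Irrational ((5:ℝ).sqrt + 1) := by simpa using h5.add_natCast 1
  have h2 : Irrational (((5:ℝ).sqrt + 1) / 2) := by
    rw [div_eq_mul_inv, show ((2:ℝ))⁻¹ = ((2⁻¹ : ℚ) : ℝ) by push_cast; ring]
    exact this.mul_ratCast (by norm_num)
  unfold phi
  convert h2 using 2
  push_cast
  ring

lemma conj_sum (s : Finset ℤ) (c : ℤ → ℕ) (N : ℕ)
    (h : ∑ i ∈ s, (c i : ℝ) * phi ^ i = N) :
    ∑ i ∈ s, (c i : ℝ) * psi ^ i = N := by
  choose a b hab using exists_int_rep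
  set A : ℤ := ∑ i ∈ s, (c i : ℤ) * a i with hA
  set B : ℤ := ∑ i ∈ s, (c i : ℤ) * b i with hB
  have hphi : ∑ i ∈ s, (c i : ℝ) * phi ^ i = (A : ℝ) + (B : ℝ) * phi := by
    rw [hA, hB]
    push_cast
    rw [Finset.sum_mul, ← Finset.sum_add_distrib]
    apply Finset.sum_congr rfl
    intro i hi
    rw [(hab i).1]
    ring
  have hpsi : ∑ i ∈ s, (c i : ℝ) * psi ^ i = (A : ℝ) + (B : ℝ) * psi := by
    rw [hA, hB]
    push_cast
    rw [Finset.sum_mul, ← Finset.sum_add_distrib]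
    apply Finset.sum_congr rfl
    intro i hi
    rw [(hab i).2]
    ring
  have hB0 : B = 0 := by
    by_contra hB0
    have : phi = ((N : ℝ) - A) / B := by
      rw [h] at hphi
      field_simp
      push_cast at hphi ⊢
      linarith
    have hrat : phi = (((N : ℤ) - A : ℤ) : ℝ) / ((B : ℤ) : ℝ) := by push_cast; push_cast at this; linarith
    have : ¬ Irrational phi := by
      rw [hrat]
      rw [show ((((N : ℤ) - A : ℤ) : ℝ) / ((B : ℤ) : ℝ)) = ((((N:ℤ) - A : ℚ) / (B : ℚ) : ℚ) : ℝ) by push_cast; ring]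
      exact Rat.not_irrational _
    exact this irrational_phi
  have hA0 : (A : ℝ) = N := by
    rw [h] at hphi
    rw [hB0] at hphi
    push_cast at hphi
    linarith
  rw [hpsi, hB0, hA0]
  push_cast
  ring

lemma lucas_real : ∀ m : ℕ, (Lucas m : ℝ) = phi ^ m + psi ^ m := by
  intro m
  induction m using Nat.twoStepInduction with
  | zero => norm_num [Lucas, phi, psi]
  | one => norm_num [Lucas, phi, psi]
  | more n ih1 ih2 =>
    show ((Lucas (n + 1) + Lucas n : ℕ) : ℝ) = _
    push_cast
    rw [ih1, ih2]
    have hp := phi_sq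
    have hq := psi_sq
    have e1 : phi ^ (n + 2) = phi ^ (n + 1) + phi ^ n := by
      rw [pow_succ, pow_succ]
      linear_combination phi ^ n * hp
    have e2 : psi ^ (n + 2) = psi ^ (n + 1) + psi ^ n := by
      rw [pow_succ, pow_succ]
      linear_combination psi ^ n * hq
    rw [e1, e2]
    ring

lemma digit_one {N : ℕ} {d : ℤ → ℕ} (hd : IsBasePhi N d) {i : ℤ}
    (hi : i ∈ hd.1.toFinset) : d i = 1 := by
  have h1 := hd.2.1 i
  have h2 : d i ≠ 0 := by simpa using hi
  omega

lemma nonconsec {N : ℕ} {d : ℤ → ℕ} (hd : IsBasePhi N d) :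
    ∀ i ∈ hd.1.toFinset, i + 1 ∉ hd.1.toFinset := by
  intro i hi hi1
  have := hd.2.2.1 i
  simp only [Set.Finite.mem_toFinset, Set.mem_setOf_eq] at hi hi1
  rcases Nat.mul_eq_zero.mp this with h | h
  · exact hi h
  · exact hi1 h

lemma sum_d_eq {N : ℕ} {d : ℤ → ℕ} (hd : IsBasePhi N d) (f : ℤ → ℝ) :
    ∑ i ∈ hd.1.toFinset, (d i : ℝ) * f i = ∑ i ∈ hd.1.toFinset, f i := by
  apply Finset.sum_congr rfl
  intro i hi
  rw [digit_one hd hi]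
  push_cast
  ring

lemma sum_phi_eq {N : ℕ} {d : ℤ → ℕ} (hd : IsBasePhi N d) :
    ∑ i ∈ hd.1.toFinset, phi ^ i = (N : ℝ) := by
  rw [← sum_d_eq hd]
  have h := tsum_eq_sum (L := SummationFilter.unconditional ℤ) (s := hd.1.toFinset) (f := fun i => (d i : ℝ) * phi ^ i) (by
    intro b hb
    simp only [Set.Finite.mem_toFinset, Set.mem_setOf_eq, not_not] at hb
    simp [hb])
  rw [← h]
  exact hd.2.2.2

lemma sum_psi_eq {N : ℕ} {d : ℤ → ℕ} (hd : IsBasePhi N d) :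
    ∑ i ∈ hd.1.toFinset, psi ^ i = (N : ℝ) := by
  rw [← sum_d_eq hd]
  apply conj_sum
  rw [sum_d_eq hd]
  exact sum_phi_eq hd

lemma unique_aux {N : ℕ} {d e : ℤ → ℕ} (hd : IsBasePhi N d) (he : IsBasePhi N e)
    (i₀ : ℤ) (hmax : ∀ i, i₀ < i → d i = e i) (hd0 : d i₀ ≠ 0) (he0 : e i₀ = 0) : False := by
  classical
  set sd := hd.1.toFinset with hsd
  set se := he.1.toFinset with hse
  set t := sd ∪ se with ht
  have hdt : ∑ i ∈ t, (d i : ℝ) * phi ^ i = (N : ℝ) := by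
    rw [← Finset.sum_subset (Finset.subset_union_left (s₂ := se))]
    · rw [sum_d_eq hd, sum_phi_eq hd]
    · intro x hx hx2
      have : d x = 0 := by
        by_contra h
        exact hx2 (by simp [hsd, h])
      simp [this]
  have het : ∑ i ∈ t, (e i : ℝ) * phi ^ i = (N : ℝ) := by
    rw [← Finset.sum_subset (Finset.subset_union_right (s₁ := sd))]
    · rw [sum_d_eq he, sum_phi_eq he]
    · intro x hx hx2
      have : e x = 0 := by
        by_contra h
        exact hx2 (by simp [hse, h])
      simp [this]
  have hsplitd := Finset.sum_filter_add_sum_filter_not t (fun i => i₀ < i)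
    (fun i => (d i : ℝ) * phi ^ i)
  have hsplite := Finset.sum_filter_add_sum_filter_not t (fun i => i₀ < i)
    (fun i => (e i : ℝ) * phi ^ i)
  have hagree : ∑ i ∈ t.filter (fun i => i₀ < i), (d i : ℝ) * phi ^ i
      = ∑ i ∈ t.filter (fun i => i₀ < i), (e i : ℝ) * phi ^ i := by
    apply Finset.sum_congr rfl
    intro i hi
    rw [hmax i (Finset.mem_filter.mp hi).2]
  have hkey : ∑ i ∈ t.filter (fun i => ¬ i₀ < i), (d i : ℝ) * phi ^ i
      = ∑ i ∈ t.filter (fun i => ¬ i₀ < i), (e i : ℝ) * phi ^ i := by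
    have := hdt.trans het.symm
    rw [← hsplitd, ← hsplite, hagree] at this
    linarith
  -- lower bound for d side
  have hi₀t : i₀ ∈ t.filter (fun i => ¬ i₀ < i) := by
    simp only [Finset.mem_filter, ht, Finset.mem_union, hsd]
    exact ⟨Or.inl (by simp [hd0]), by omega⟩
  have hlow : phi ^ i₀ ≤ ∑ i ∈ t.filter (fun i => ¬ i₀ < i), (d i : ℝ) * phi ^ i := by
    have h1 : d i₀ = 1 := by
      have := hd.2.1 i₀; omega
    calc phi ^ i₀ = (d i₀ : ℝ) * phi ^ i₀ := by rw [h1]; push_cast; ring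
    _ ≤ _ := Finset.single_le_sum (f := fun i => (d i : ℝ) * phi ^ i)
      (fun i _ => mul_nonneg (Nat.cast_nonneg _) (zpow_pos phi_pos i).le) hi₀t
  -- upper bound for e side
  set u := (t.filter (fun i => ¬ i₀ < i)).filter (fun i => e i ≠ 0) with hu
  have hup : ∑ i ∈ t.filter (fun i => ¬ i₀ < i), (e i : ℝ) * phi ^ i
      = ∑ i ∈ u, phi ^ i := by
    rw [hu]
    rw [show ∑ i ∈ t.filter (fun i => ¬ i₀ < i), (e i : ℝ) * phi ^ i
        = ∑ i ∈ (t.filter (fun i => ¬ i₀ < i)).filter (fun i => e i ≠ 0),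
          (e i : ℝ) * phi ^ i from (Finset.sum_subset (Finset.filter_subset _ _)
        (by
          intro x hx hx2
          have : e x = 0 := by
            by_contra h
            exact hx2 (Finset.mem_filter.mpr ⟨hx, h⟩)
          simp [this])).symm]
    apply Finset.sum_congr rfl
    intro i hi
    have h1 : e i = 1 := by
      have := he.2.1 i
      have h2 : e i ≠ 0 := (Finset.mem_filter.mp hi).2
      omega
    rw [h1]
    push_cast
    ring
  have hub : ∑ i ∈ u, phi ^ i < phi ^ i₀ := by
    have h := sum_pow_lt u (i₀ - 1) ?_ ?_
    · rw [show i₀ - 1 + 1 = i₀ by ring] at h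
      exact h
    · intro i hi
      simp only [hu, Finset.mem_filter] at hi
      have h1 : ¬ i₀ < i := hi.1.2
      have h2 : i ≠ i₀ := by
        intro hh
        exact hi.2 (by rw [hh, he0])
      omega
    · intro i hi hi1
      simp only [hu, Finset.mem_filter] at hi hi1
      have := he.2.2.1 i
      rcases Nat.mul_eq_zero.mp this with h | h
      · exact hi.2 h
      · exact hi1.2 h
  rw [hkey, hup] at hlow
  linarith

lemma basePhi_unique {N : ℕ} {d e : ℤ → ℕ} (hd : IsBasePhi N d) (he : IsBasePhi N e) : d = e := by
  classical
  by_contra h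
  have hne : {i : ℤ | d i ≠ e i}.Nonempty := by
    rcases Function.ne_iff.mp h with ⟨i, hi⟩
    exact ⟨i, hi⟩
  have hfin : {i : ℤ | d i ≠ e i}.Finite := by
    apply (hd.1.union he.1).subset
    intro i hi
    simp only [Set.mem_setOf_eq] at hi
    by_contra hc
    simp only [Set.mem_union, Set.mem_setOf_eq, not_or, not_not] at hc
    rw [hc.1, hc.2] at hi
    exact hi rfl
  have hFne : hfin.toFinset.Nonempty := by
    rwa [Set.Finite.toFinset_nonempty]
  set i₀ := hfin.toFinset.max' hFne with hi₀
  have hdiff : d i₀ ≠ e i₀ := by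
    have := hfin.toFinset.max'_mem hFne
    simpa using this
  have hmax : ∀ i, i₀ < i → d i = e i := by
    intro i hi
    by_contra hc
    have : i ∈ hfin.toFinset := by simpa using hc
    have := hfin.toFinset.le_max' i this
    omega
  have hd1 := hd.2.1 i₀
  have he1 := he.2.1 i₀
  rcases Nat.lt_or_ge (d i₀) (e i₀) with hlt | hge
  · exact unique_aux he hd i₀ (fun i hi => (hmax i hi).symm) (by omega) (by omega)
  · exact unique_aux hd he i₀ hmax (by omega) (by omega)

lemma support_structure {N : ℕ} {d : ℤ → ℕ} (hd : IsBasePhi N d) (M : ℤ)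
    (hMeven : Even M) (hM : 4 ≤ M)
    (hlowN : phi ^ (M - 1) < (N : ℝ)) (hhighN : (N : ℝ) < phi ^ M) :
    d (M - 1) = 1 ∧ (∀ i, M - 1 < i → d i = 0) ∧ d (M - 2) = 0 ∧
    d (-M) = 1 ∧ (∀ i, i < -M → d i = 0) ∧ d (-M + 1) = 0 ∧ d (-M + 2) = 0 := by
  classical
  set s := hd.1.toFinset with hs
  have hmem : ∀ i : ℤ, i ∈ s ↔ d i ≠ 0 := by
    intro i; simp [hs]
  have hNpos : (0:ℝ) < N := lt_trans (zpow_pos phi_pos _) hlowN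
  have hsne : s.Nonempty := by
    rcases s.eq_empty_or_nonempty with h | h
    · exfalso
      have := sum_phi_eq hd
      rw [← hs, h] at this
      simp at this
      linarith
    · exact h
  have hnc := nonconsec hd
  set m := s.max' hsne with hm
  set j := s.min' hsne with hj
  -- top index
  have htop1 : (N:ℝ) < phi ^ (m + 1) := by
    rw [← sum_phi_eq hd]
    exact sum_pow_lt s m (fun i hi => s.le_max' i hi) hnc
  have htop2 : phi ^ m ≤ (N:ℝ) := by
    rw [← sum_phi_eq hd]
    exact Finset.single_le_sum (f := fun i => phi ^ i)
      (fun i _ => (zpow_pos phi_pos i).le) (s.max'_mem hsne)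
  have hmval : m = M - 1 := by
    have h1 : M - 1 < m + 1 := phi_zpow_lt_iff.mp (hlowN.trans htop1)
    have h2 : m < M := phi_zpow_lt_iff.mp (lt_of_le_of_lt htop2 hhighN)
    omega
  -- conjugate sum bound for sets with min bound
  have habs : ∀ (u : Finset ℤ) (a : ℤ), (∀ i ∈ u, a ≤ i) → (∀ i ∈ u, i + 1 ∉ u) →
      |∑ i ∈ u, psi ^ i| < phi ^ (-a + 1) := by
    intro u a hu hnc'
    calc |∑ i ∈ u, psi ^ i| ≤ ∑ i ∈ u, |psi ^ i| := Finset.abs_sum_le_sum_abs _ _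
    _ = ∑ i ∈ u, phi ^ (-i) := by
      apply Finset.sum_congr rfl
      intro i _
      exact abs_psi_zpow i
    _ < phi ^ (-a + 1) := sum_pow_neg_lt u a hu hnc'
  have hpsiN : ∑ i ∈ s, psi ^ i = (N : ℝ) := sum_psi_eq hd
  -- bottom index: Claim A
  have hjA : j ≤ -M + 1 := by
    by_contra hc
    push_neg at hc
    have h1 := habs s j (fun i hi => s.min'_le i hi) hnc
    rw [hpsiN] at h1
    have h2 : phi ^ (-j + 1) ≤ phi ^ (M - 1) :=
      zpow_le_zpow_right₀ one_lt_phi.le (by omega)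
    have := abs_of_pos hNpos
    linarith [le_abs_self (N:ℝ)]
  -- split off the minimum
  have hjmem := s.min'_mem hsne
  have hsplit : (N : ℝ) = psi ^ j + ∑ i ∈ s.erase j, psi ^ i := by
    rw [← hpsiN, Finset.add_sum_erase _ _ hjmem]
  have herase_ge : ∀ i ∈ s.erase j, j + 2 ≤ i := by
    intro i hi
    have h1 : i ∈ s := Finset.mem_of_mem_erase hi
    have h2 : i ≠ j := Finset.ne_of_mem_erase hi
    have h3 : j ≤ i := s.min'_le i h1
    have h4 : i ≠ j + 1 := by
      intro hh
      exact hnc j hjmem (hh ▸ h1)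
    omega
  have herase_abs : |∑ i ∈ s.erase j, psi ^ i| < phi ^ (-j - 1) := by
    have := habs (s.erase j) (j + 2) herase_ge
      (fun i hi h => hnc i (Finset.mem_of_mem_erase hi) (Finset.mem_of_mem_erase h))
    rwa [show -(j+2) + 1 = -j - 1 by ring] at this
  -- Claim B : j even
  have hjB : Even j := by
    by_contra hodd
    have hoddj : Odd j := Int.not_even_iff_odd.mp hodd
    have hpsij : psi ^ j = -phi ^ (-j) := by
      rw [psi_zpow, Odd.neg_one_zpow hoddj]
      ring
    have h1 : (N:ℝ) < -phi ^ (-j) + phi ^ (-j - 1) := by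
      rw [hsplit, hpsij]
      have := (abs_lt.mp herase_abs).2
      linarith
    have h2 : phi ^ (-j - 1) < phi ^ (-j) := phi_zpow_lt (by omega)
    linarith
  -- Claim C : -M ≤ j
  have hjC : -M ≤ j := by
    by_contra hc
    push_neg at hc
    have hje : j ≤ -M - 2 := by
      rcases hjB with ⟨t, ht⟩
      rcases hMeven with ⟨u, hu⟩
      omega
    have hpsij : psi ^ j = phi ^ (-j) := by
      rw [psi_zpow, Even.neg_one_zpow hjB, one_mul]
    have h1 : phi ^ (-j) - phi ^ (-j - 1) ≤ (N:ℝ) := by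
      rw [hsplit, hpsij]
      have := (abs_lt.mp herase_abs).1
      linarith
    have hfib := zpow_fib (-j - 2)
    rw [show -j - 2 + 2 = -j by ring, show -j - 2 + 1 = -j - 1 by ring] at hfib
    have h2 : phi ^ M ≤ phi ^ (-j - 2) :=
      zpow_le_zpow_right₀ one_lt_phi.le (by omega)
    linarith
  have hjval : j = -M := by
    rcases hjB with ⟨t, ht⟩
    rcases hMeven with ⟨u, hu⟩
    omega
  -- Claim D : -M + 2 ∉ s
  have hD : -M + 2 ∉ s := by
    intro hmem2
    have hne2 : (-M + 2 : ℤ) ≠ j := by omega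
    have hmem2' : (-M + 2 : ℤ) ∈ s.erase j := Finset.mem_erase.mpr ⟨hne2, hmem2⟩
    have hsplit2 : (N : ℝ) = psi ^ j + (psi ^ (-M + 2) +
        ∑ i ∈ (s.erase j).erase (-M + 2), psi ^ i) := by
      rw [hsplit, Finset.add_sum_erase _ _ hmem2']
    have hge4 : ∀ i ∈ (s.erase j).erase (-M + 2), -M + 4 ≤ i := by
      intro i hi
      have h1 : i ∈ s.erase j := Finset.mem_of_mem_erase hi
      have h2 : i ≠ -M + 2 := Finset.ne_of_mem_erase hi
      have h3 := herase_ge i h1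
      have h4 : i ≠ -M + 3 := by
        intro hh
        have h5 : i ∈ s := Finset.mem_of_mem_erase (Finset.mem_of_mem_erase hi)
        exact hnc (-M + 2) hmem2 (by rw [show (-M + 2 + 1 : ℤ) = i by omega]; exact h5)
      omega
    have habs2 : |∑ i ∈ (s.erase j).erase (-M + 2), psi ^ i| < phi ^ (M - 3) := by
      have := habs _ (-M + 4) hge4 (fun i hi h => hnc i
        (Finset.mem_of_mem_erase (Finset.mem_of_mem_erase hi))
        (Finset.mem_of_mem_erase (Finset.mem_of_mem_erase h)))
      rwa [show -(-M + 4) + 1 = M - 3 by ring] at this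
    have hpsij : psi ^ j = phi ^ M := by
      rw [psi_zpow, Even.neg_one_zpow hjB, one_mul, hjval, neg_neg]
    have hpsi2 : psi ^ (-M + 2 : ℤ) = phi ^ (M - 2) := by
      rw [psi_zpow, Even.neg_one_zpow (by rcases hMeven with ⟨u,hu⟩; exact ⟨-u+1, by omega⟩),
        one_mul, show -(-M + 2) = M - 2 by ring]
    have hfib := zpow_fib (M - 4)
    rw [show M - 4 + 2 = M - 2 by ring, show M - 4 + 1 = M - 3 by ring] at hfib
    have h1 : phi ^ M + phi ^ (M - 2) - phi ^ (M - 3) < (N:ℝ) := by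
      rw [hsplit2, hpsij, hpsi2]
      have := (abs_lt.mp habs2).1
      linarith
    have h2 : (0:ℝ) < phi ^ (M - 4) := zpow_pos phi_pos _
    linarith
  -- conclusions
  refine ⟨?_, ?_, ?_, ?_, ?_, ?_, ?_⟩
  · exact digit_one hd (by rw [← hs, ← hmval]; exact s.max'_mem hsne)
  · intro i hi
    by_contra hc
    have : i ∈ s := (hmem i).mpr hc
    have := s.le_max' i this
    omega
  · by_contra hc
    have h1 : (M - 2 : ℤ) ∈ s := (hmem _).mpr hc
    have h2 : (M - 1 : ℤ) ∈ s := by rw [← hmval]; exact s.max'_mem hsne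
    exact hnc _ h1 (by rw [show M - 2 + 1 = M - 1 by ring]; exact h2)
  · exact digit_one hd (by rw [← hs, ← hjval]; exact s.min'_mem hsne)
  · intro i hi
    by_contra hc
    have : i ∈ s := (hmem i).mpr hc
    have := s.min'_le i this
    omega
  · by_contra hc
    have h1 : (-M + 1 : ℤ) ∈ s := (hmem _).mpr hc
    have h2 : (-M : ℤ) ∈ s := by rw [← hjval]; exact s.min'_mem hsne
    exact hnc _ h2 (by rw [show -M + 1 = -M + 1 by ring] at h1; exact h1)
  · by_contra hc
    exact hD ((hmem _).mpr hc)

lemma construct {N₁ N₂ : ℕ} {d : ℤ → ℕ} (hd : IsBasePhi N₁ d) (A : ℤ) (hA : 4 ≤ A)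
    (hd1 : d (A - 1) = 1) (hd2 : ∀ i, A - 1 < i → d i = 0) (hd3 : d (A - 2) = 0)
    (hd4 : d (-A) = 1) (hd5 : ∀ i, i < -A → d i = 0) (hd6 : d (-A + 1) = 0)
    (hd7 : d (-A + 2) = 0)
    (hsum : (N₂ : ℝ) = (N₁ : ℝ) + phi ^ A + phi ^ (-A)) :
    IsBasePhi N₂ (fun i => if i = A + 1 ∨ i = -A + 1 ∨ i = -A - 2 then 1
      else if -A + 2 ≤ i ∧ i ≤ A - 3 then d i else 0) := by
  classical
  set e' : ℤ → ℕ := fun i => if i = A + 1 ∨ i = -A + 1 ∨ i = -A - 2 then 1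
      else if -A + 2 ≤ i ∧ i ≤ A - 3 then d i else 0 with he'
  set sd := hd.1.toFinset with hsd
  have hmem : ∀ i : ℤ, i ∈ sd ↔ d i ≠ 0 := fun i => by simp [hsd]
  have hsupp : ∀ i : ℤ, e' i ≠ 0 → i = A + 1 ∨ i = -A + 1 ∨ i = -A - 2 ∨ d i ≠ 0 := by
    intro i hi
    rw [he'] at hi
    simp only at hi
    split_ifs at hi with h1 h2
    · tauto
    · tauto
    · exact absurd rfl hi
  refine ⟨?_, ?_, ?_, ?_⟩
  · apply Set.Finite.subset (hd.1.union ({A + 1, -A + 1, -A - 2} : Finset ℤ).finite_toSet)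
    intro i hi
    simp only [Set.mem_setOf_eq] at hi
    rcases hsupp i hi with h | h | h | h
    · right; simp [h]
    · right; simp [h]
    · right; simp [h]
    · left; exact h
  · intro i
    rw [he']
    simp only
    split_ifs with h1 h2
    · exact le_refl 1
    · exact hd.2.1 i
    · exact Nat.zero_le 1
  · intro i
    rcases Nat.eq_zero_or_pos (e' i) with h | h
    · rw [h, Nat.zero_mul]
    have h0 : e' i ≠ 0 := by omega
    suffices hz : e' (i + 1) = 0 by rw [hz, Nat.mul_zero]
    rcases hsupp i h0 with h1 | h1 | h1 | h1
    · rw [he']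
      simp only
      rw [if_neg (by omega), if_neg (by omega)]
    · rw [he']
      simp only
      rw [if_neg (by omega), if_pos (by omega)]
      rw [show i + 1 = -A + 2 by omega]
      exact hd7
    · rw [he']
      simp only
      rw [if_neg (by omega), if_neg (by omega)]
    · -- d i ≠ 0, so i is in the support of d
      have hile : i ≤ A - 1 := by
        by_contra hc
        exact h1 (hd2 i (by omega))
      have hige : -A ≤ i := by
        by_contra hc
        exact h1 (hd5 i (by omega))
      have hcons := hd.2.2.1 i
      have hdi1 : d (i + 1) = 0 := by
        rcases Nat.mul_eq_zero.mp hcons with h | h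
        · exact absurd h h1
        · exact h
      rw [he']
      simp only
      by_cases hsp : i + 1 = A + 1 ∨ i + 1 = -A + 1 ∨ i + 1 = -A - 2
      · -- impossible: i + 1 = A + 1 means i = A > A - 1 so d i = 0
        exfalso
        rcases hsp with h | h | h
        · exact h1 (hd2 i (by omega))
        · have : e' i = 0 := by
            rw [he']; simp only; rw [if_neg (by omega), if_neg (by omega)]
          exact h0 this
        · exact h1 (hd5 i (by omega))
      · rw [if_neg hsp]
        split_ifs with h2
        · exact hdi1
        · rfl
  · -- the sum
    have h0 : ∀ b : ℤ, b ∉ insert (A + 1) (insert (-A + 1) (insert (-A - 2) sd)) →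
        (e' b : ℝ) * phi ^ b = 0 := by
      intro b hb
      simp only [Finset.mem_insert] at hb
      push_neg at hb
      obtain ⟨hb1, hb2, hb3, hb4⟩ := hb
      have : e' b = 0 := by
        by_contra hc
        rcases hsupp b hc with h | h | h | h
        · exact hb1 h
        · exact hb2 h
        · exact hb3 h
        · exact hb4 ((hmem b).mpr h)
      rw [this]
      simp
    rw [tsum_eq_sum h0]
    have hm1 : (A + 1 : ℤ) ∉ insert (-A + 1) (insert (-A - 2) sd) := by
      simp only [Finset.mem_insert, hmem]
      push_neg
      refine ⟨by omega, by omega, ?_⟩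
      exact hd2 _ (by omega)
    have hm2 : (-A + 1 : ℤ) ∉ insert (-A - 2) sd := by
      simp only [Finset.mem_insert, hmem]
      push_neg
      refine ⟨by omega, ?_⟩
      exact hd6
    have hm3 : (-A - 2 : ℤ) ∉ sd := by
      simp only [hmem, not_not]
      exact hd5 _ (by omega)
    rw [Finset.sum_insert hm1, Finset.sum_insert hm2, Finset.sum_insert hm3]
    have he1 : e' (A + 1) = 1 := by rw [he']; simp
    have he2 : e' (-A + 1) = 1 := by rw [he']; simp
    have he3 : e' (-A - 2) = 1 := by rw [he']; simp
    rw [he1, he2, he3]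
    -- now the sum over sd
    have hmA1 : (A - 1 : ℤ) ∈ sd := (hmem _).mpr (by omega)
    have hmA2 : (-A : ℤ) ∈ sd.erase (A - 1) := by
      rw [Finset.mem_erase]
      exact ⟨by omega, (hmem _).mpr (by omega)⟩
    have hsplit : ∀ f : ℤ → ℝ, ∑ i ∈ sd, f i
        = f (A - 1) + f (-A) + ∑ i ∈ (sd.erase (A - 1)).erase (-A), f i := by
      intro f
      rw [← Finset.add_sum_erase _ _ hmA1, ← Finset.add_sum_erase _ _ hmA2]
      ring
    have hrange : ∀ i ∈ (sd.erase (A - 1)).erase (-A), -A + 2 ≤ i ∧ i ≤ A - 3 := by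
      intro i hi
      rw [Finset.mem_erase, Finset.mem_erase, hmem] at hi
      obtain ⟨hi1, hi2, hi3⟩ := hi
      have l1 : ¬ i < -A := fun hc => hi3 (hd5 i hc)
      have l2 : i ≠ -A + 1 := fun hc => hi3 (by rw [hc]; exact hd6)
      have l3 : ¬ A - 1 < i := fun hc => hi3 (hd2 i hc)
      have l4 : i ≠ A - 2 := fun hc => hi3 (by rw [hc]; exact hd3)
      omega
    have heA1 : e' (A - 1) = 0 := by
      rw [he']; simp only; rw [if_neg (by omega), if_neg (by omega)]
    have heA2 : e' (-A) = 0 := by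
      rw [he']; simp only; rw [if_neg (by omega), if_neg (by omega)]
    have hrest : ∑ i ∈ (sd.erase (A - 1)).erase (-A), (e' i : ℝ) * phi ^ i
        = ∑ i ∈ (sd.erase (A - 1)).erase (-A), phi ^ i := by
      apply Finset.sum_congr rfl
      intro i hi
      obtain ⟨hr1, hr2⟩ := hrange i hi
      have : e' i = d i := by
        rw [he']; simp only; rw [if_neg (by omega), if_pos ⟨hr1, hr2⟩]
      rw [this, digit_one hd (Finset.mem_of_mem_erase (Finset.mem_of_mem_erase hi))]
      push_cast
      ring
    have hsum_e : ∑ i ∈ sd, (e' i : ℝ) * phi ^ i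
        = ∑ i ∈ (sd.erase (A - 1)).erase (-A), phi ^ i := by
      rw [hsplit (fun i => (e' i : ℝ) * phi ^ i), heA1, heA2, hrest]
      push_cast
      ring
    have hsum_d : ∑ i ∈ (sd.erase (A - 1)).erase (-A), phi ^ i
        = (N₁ : ℝ) - phi ^ (A - 1) - phi ^ (-A) := by
      have h := sum_phi_eq hd
      rw [← hsd] at h
      rw [hsplit (fun i => phi ^ i)] at h
      linarith
    rw [hsum_e, hsum_d]
    have f1 := zpow_fib (A - 1)
    rw [show A - 1 + 2 = A + 1 by ring, show A - 1 + 1 = A by ring] at f1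
    have f2 := zpow_fib (-A - 1)
    rw [show -A - 1 + 2 = -A + 1 by ring, show -A - 1 + 1 = -A by ring] at f2
    have f3 := zpow_fib (-A - 2)
    rw [show -A - 2 + 2 = -A by ring, show -A - 2 + 1 = -A - 1 by ring] at f3
    rw [hsum]
    push_cast
    linarith

lemma lucas_pos : ∀ m : ℕ, 0 < Lucas m := by
  intro m
  induction m using Nat.twoStepInduction with
  | zero => norm_num [Lucas]
  | one => norm_num [Lucas]
  | more n ih1 ih2 => show 0 < Lucas (n+1) + Lucas n; omega

lemma lucas_even_real (m : ℕ) (hm : Even m) :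
    (Lucas m : ℝ) = phi ^ (m : ℤ) + phi ^ (-(m : ℤ)) := by
  rw [lucas_real, ← zpow_natCast phi, ← zpow_natCast psi, psi_zpow,
    Even.neg_one_zpow (by exact_mod_cast hm : Even (m:ℤ)), one_mul]

lemma lucas_odd_real (m : ℕ) (hm : Odd m) :
    (Lucas m : ℝ) = phi ^ (m : ℤ) - phi ^ (-(m : ℤ)) := by
  rw [lucas_real, ← zpow_natCast phi, ← zpow_natCast psi, psi_zpow,
    Odd.neg_one_zpow (by exact_mod_cast hm : Odd (m:ℤ))]
  ring

lemma phi_zpow_neg_lt_one (m : ℤ) (hm : 0 < m) : phi ^ (-m) < 1 := by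
  have := phi_zpow_lt (a := -m) (b := 0) (by omega)
  rwa [zpow_zero] at this

/-- Recursion on `I_n`: `β(L_{2n+1}+k) = 1000(10)^{-1} β(L_{2n-1}+k) (01)^{-1} 1001`. -/
theorem recursion_In (n : ℕ) (hn : 2 ≤ n) (k : ℕ) (hk1 : 1 ≤ k)
    (hk2 : k ≤ Lucas (2 * n - 2) - 1) (d e : ℤ → ℕ)
    (hd : IsBasePhi (Lucas (2 * n - 1) + k) d)
    (he : IsBasePhi (Lucas (2 * n + 1) + k) e) :
    (∀ i : ℤ, -(2 * n : ℤ) + 2 ≤ i → i ≤ 2 * (n : ℤ) - 3 → e i = d i) ∧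
    e (2 * (n : ℤ) + 1) = 1 ∧ e (2 * (n : ℤ)) = 0 ∧ e (2 * (n : ℤ) - 1) = 0 ∧
    e (2 * (n : ℤ) - 2) = 0 ∧
    e (-(2 * n : ℤ) + 1) = 1 ∧ e (-(2 * n : ℤ)) = 0 ∧ e (-(2 * n : ℤ) - 1) = 0 ∧
    e (-(2 * n : ℤ) - 2) = 1 ∧
    (∀ i : ℤ, 2 * (n : ℤ) + 1 < i → e i = 0) ∧
    (∀ i : ℤ, i < -(2 * n : ℤ) - 2 → e i = 0) := by
  obtain ⟨p, rfl⟩ : ∃ p, n = p + 2 := ⟨n - 2, by omega⟩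
  rw [show 2 * (p + 2) - 1 = 2 * p + 3 from by omega] at hd
  rw [show 2 * (p + 2) + 1 = 2 * p + 5 from by omega] at he
  rw [show 2 * (p + 2) - 2 = 2 * p + 2 from by omega] at hk2
  have r1 : Lucas (2 * p + 4) = Lucas (2 * p + 3) + Lucas (2 * p + 2) := rfl
  have r2 : Lucas (2 * p + 5) = Lucas (2 * p + 4) + Lucas (2 * p + 3) := rfl
  have hk2' : k + 1 ≤ Lucas (2 * p + 2) := by
    have := lucas_pos (2 * p + 2)
    omega
  -- cast facts for exponents
  have c3 : ((2 * p + 3 : ℕ) : ℤ) = 2 * (p : ℤ) + 3 := by push_cast; ring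
  have c4 : ((2 * p + 4 : ℕ) : ℤ) = 2 * (p : ℤ) + 4 := by push_cast; ring
  have hb3 : (Lucas (2 * p + 3) : ℝ)
      = phi ^ (2 * (p : ℤ) + 3) - phi ^ (-(2 * (p : ℤ) + 3)) := by
    have h := lucas_odd_real (2 * p + 3) ⟨p + 1, by omega⟩
    rwa [c3] at h
  have hb4 : (Lucas (2 * p + 4) : ℝ)
      = phi ^ (2 * (p : ℤ) + 4) + phi ^ (-(2 * (p : ℤ) + 4)) := by
    have h := lucas_even_real (2 * p + 4) ⟨p + 2, by omega⟩
    rwa [c4] at h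
  have hsm1 : phi ^ (-(2 * (p : ℤ) + 3)) < 1 := phi_zpow_neg_lt_one _ (by omega)
  have hsm2 : phi ^ (-(2 * (p : ℤ) + 4)) < 1 := phi_zpow_neg_lt_one _ (by omega)
  -- bounds for N₁ = Lucas (2p+3) + k
  have hlow : phi ^ (2 * (p : ℤ) + 4 - 1) < ((Lucas (2 * p + 3) + k : ℕ) : ℝ) := by
    rw [show 2 * (p : ℤ) + 4 - 1 = 2 * (p : ℤ) + 3 from by ring]
    push_cast
    rw [hb3]
    have : (1 : ℝ) ≤ (k : ℝ) := by exact_mod_cast hk1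
    linarith
  have hhigh : ((Lucas (2 * p + 3) + k : ℕ) : ℝ) < phi ^ (2 * (p : ℤ) + 4) := by
    have hle : Lucas (2 * p + 3) + k + 1 ≤ Lucas (2 * p + 4) := by omega
    have hle' : ((Lucas (2 * p + 3) + k : ℕ) : ℝ) ≤ (Lucas (2 * p + 4) : ℝ) - 1 := by
      push_cast
      have : ((Lucas (2 * p + 3) + k + 1 : ℕ) : ℝ) ≤ ((Lucas (2 * p + 4) : ℕ) : ℝ) := by
        exact_mod_cast hle
      push_cast at this
      linarith
    rw [hb4] at hle'
    linarith
  have hstruct := support_structure hd (2 * (p : ℤ) + 4) ⟨(p : ℤ) + 2, by ring⟩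
    (by omega) hlow hhigh
  obtain ⟨hd1, hd2, hd3, hd4, hd5, hd6, hd7⟩ := hstruct
  -- value relation
  have hsum : ((Lucas (2 * p + 5) + k : ℕ) : ℝ) = ((Lucas (2 * p + 3) + k : ℕ) : ℝ)
      + phi ^ (2 * (p : ℤ) + 4) + phi ^ (-(2 * (p : ℤ) + 4)) := by
    have : (Lucas (2 * p + 5) : ℝ) = (Lucas (2 * p + 3) : ℝ) + (Lucas (2 * p + 4) : ℝ) := by
      rw [r2]; push_cast; ring
    push_cast
    rw [this, hb4]
    ring
  have hcon := construct hd (2 * (p : ℤ) + 4) (by omega) hd1 hd2 hd3 hd4 hd5 hd6 hd7 hsum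
  have hee := basePhi_unique he hcon
  have hev : ∀ i : ℤ, e i = if i = 2 * (p : ℤ) + 4 + 1 ∨ i = -(2 * (p : ℤ) + 4) + 1
      ∨ i = -(2 * (p : ℤ) + 4) - 2 then 1
      else if -(2 * (p : ℤ) + 4) + 2 ≤ i ∧ i ≤ 2 * (p : ℤ) + 4 - 3 then d i else 0 :=
    fun i => congrFun hee i
  have hcast : ((p + 2 : ℕ) : ℤ) = (p : ℤ) + 2 := by push_cast; ring
  refine ⟨?_, ?_, ?_, ?_, ?_, ?_, ?_, ?_, ?_, ?_, ?_⟩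
  · intro i h1 h2
    rw [hcast] at h1 h2
    rw [hev i, if_neg (by omega), if_pos (by constructor <;> omega)]
  · rw [hcast, hev, if_pos (by omega)]
  · rw [hcast, hev, if_neg (by omega), if_neg (by omega)]
  · rw [hcast, hev, if_neg (by omega), if_neg (by omega)]
  · rw [hcast, hev, if_neg (by omega), if_neg (by omega)]
  · rw [hcast, hev, if_pos (by omega)]
  · rw [hcast, hev, if_neg (by omega), if_neg (by omega)]
  · rw [hcast, hev, if_neg (by omega), if_neg (by omega)]
  · rw [hcast, hev, if_pos (by omega)]
  · intro i h1
    rw [hcast] at h1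
    rw [hev i, if_neg (by omega), if_neg (by omega)]
  · intro i h1
    rw [hcast] at h1
    rw [hev i, if_neg (by omega), if_neg (by omega)]
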